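/- (Lemma 1) Let A ∈ ℝ^{M×M}, D ∈ ℝ^{N×N}, let m ≥ 1, and let Q : ℝ → ℝ^{M×N} be m-times continuously differentiable. Suppose X : ℝ → ℝ^{M×N} is differentiable with X'(t) = A·X(t) + X(t)·D + Q(t) and X(t_n) = X_n. Then for every h > 0, X(t_n + h) = e^{hS}(X_n) + Σ_{j=1}^{m} h^{j}·φ_j(hS)(Q^{(j−1)}(t_n)) + R_m(h), where R_m(h) = (h^{m+1}/(m−1)!)·∫_0^1 ∫_0^1 s^{m}·(1−θ)^{m−1}·e^{(1−s)hA}·Q^{(m)}(t_n + θ·s·h)·e^{(1−s)hD} dθ ds. -/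

import Mathlib

/-!
Variation of constants gives `X(tₙ + h) = e^{hS} Xₙ + h ∫₀¹ e^{(1-s)hS} Q(tₙ + sh) ds`.
Expanding `Q(tₙ + sh)` by Taylor's formula with integral remainder and integrating term by term,
the `j`-th Taylor term contributes `hʲ φⱼ(hS) Q^{(j-1)}(tₙ)` and the integral remainder contributes
`R_m(h)`. Finally `e^{tS} Y = e^{tA} Y e^{tD}`, since both sides solve `Y' = S Y` with the same
initial value.
-/

open MeasureTheory intervalIntegral Matrix Finset

attribute [local instance] Matrix.normedAddCommGroup Matrix.normedSpace

/-- The `φ`-functions of a continuous linear endomorphism `L`: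
`φ₀(L) = e^{L}` and `φⱼ(L) = ∫₀¹ e^{(1−θ)L}·θ^{j−1}/(j−1)! dθ` for `j ≥ 1`. -/
noncomputable def phi {V : Type*} [NormedAddCommGroup V] [NormedSpace ℝ V]
    (j : ℕ) (L : V →L[ℝ] V) : V →L[ℝ] V :=
  if j = 0 then NormedSpace.exp L
  else ∫ θ in (0:ℝ)..1,
    (θ ^ (j - 1) / (Nat.factorial (j - 1) : ℝ)) • NormedSpace.exp ((1 - θ) • L)

open NormedSpace
open scoped Nat

theorem map_add_eq_sum_add_integral_iteratedDeriv {F : Type*} [NormedAddCommGroup F]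
    [NormedSpace ℝ F] [CompleteSpace F] {f : ℝ → F} {n : ℕ} (hf : ContDiff ℝ (n + 1 : ℕ) f)
    (t₀ τ : ℝ) :
    f (t₀ + τ) = ∑ k ∈ range (n + 1), (τ ^ k / k !) • iteratedDeriv k f t₀ +
      (τ ^ (n + 1) / n !) • ∫ θ in (0:ℝ)..1, (1 - θ) ^ n • iteratedDeriv (n + 1) f (t₀ + θ * τ) := by
  have h := map_add_eq_sum_add_integral_iteratedFDeriv (x := t₀) (y := τ) (n := n)
    fun t _ => hf.contDiffAt
  simp only [iteratedFDeriv_apply_eq_iteratedDeriv_mul_prod, Fin.prod_const, smul_eq_mul] at h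
  rw [h]
  congr 1
  · refine Finset.sum_congr rfl fun k _ => ?_
    rw [smul_smul, div_eq_inv_mul]
  · rw [← intervalIntegral.integral_smul, ← intervalIntegral.integral_smul]
    refine intervalIntegral.integral_congr fun θ _ => ?_
    simp only [smul_smul]
    congr 1
    ring

section LinearODE

variable {E : Type*} [NormedAddCommGroup E] [NormedSpace ℝ E] [CompleteSpace E] {L : E →L[ℝ] E}

theorem eq_exp_smul_apply_add_integral_of_hasDerivAt {x q : ℝ → E} (hq : Continuous q)
    (hx : ∀ t, HasDerivAt x (L (x t) + q t) t) (t₀ h : ℝ) :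
    x (t₀ + h) = exp (h • L) (x t₀) +
      h • ∫ s in (0:ℝ)..1, exp (((1 - s) * h) • L) (q (t₀ + s * h)) := by
  have hderiv : ∀ τ, HasDerivAt (fun τ => exp ((h - τ) • L) (x (t₀ + τ)))
      (exp ((h - τ) • L) (q (t₀ + τ))) τ := by
    intro τ
    have hexp : HasDerivAt (fun τ : ℝ => exp ((h - τ) • L))
        ((-1 : ℝ) • (exp ((h - τ) • L) * L)) τ :=
      (hasDerivAt_exp_smul_const L (h - τ)).scomp τ ((hasDerivAt_id τ).const_sub h)
    convert hexp.clm_apply ((hx (t₀ + τ)).comp_const_add t₀ τ) using 1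
    simp [map_add]
  have hcont : Continuous fun τ => exp ((h - τ) • L) (q (t₀ + τ)) :=
    ((differentiable_exp_smul_const ℝ L).continuous.comp (continuous_sub_left h)).clm_apply
      (hq.comp (continuous_const_add t₀))
  have hftc := integral_eq_sub_of_hasDerivAt (fun τ _ => hderiv τ) (hcont.intervalIntegrable 0 h)
  have hrescale := smul_integral_comp_mul_right (a := 0) (b := 1)
    (fun τ => exp ((h - τ) • L) (q (t₀ + τ))) h
  simp only [sub_self, zero_smul, exp_zero, add_zero, sub_zero, zero_mul, one_mul] at hftc hrescale
  simp only [sub_mul, one_mul]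
  rw [hrescale, hftc, one_apply_eq_self, add_sub_cancel]

theorem exp_smul_apply_eq_of_hasDerivAt {x : ℝ → E} (hx : ∀ t, HasDerivAt x (L (x t)) t)
    (t : ℝ) : exp (t • L) (x 0) = x t := by
  simpa using Eq.symm <| eq_exp_smul_apply_add_integral_of_hasDerivAt (q := fun _ => (0 : E))
    continuous_const (fun t => by simpa using hx t) 0 t

theorem pow_succ_smul_phi_succ_apply (h : ℝ) (k : ℕ) (v : E) :
    h ^ (k + 1) • phi (k + 1) (h • L) v =
      h • ∫ s in (0:ℝ)..1, ((s * h) ^ k / k !) • exp (((1 - s) * h) • L) v := by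
  have hint : IntervalIntegrable
      (fun s : ℝ => (s ^ k / k !) • exp ((1 - s) • h • L)) volume 0 1 :=
    (((continuous_pow k).div_const _).smul ((differentiable_exp_smul_const ℝ (h • L)).continuous.comp
      (continuous_sub_left 1))).intervalIntegrable 0 1
  rw [phi, if_neg k.succ_ne_zero, Nat.add_sub_cancel, ContinuousLinearMap.intervalIntegral_apply hint,
    ← intervalIntegral.integral_smul, ← intervalIntegral.integral_smul]
  refine integral_congr fun s _ => ?_
  simp only [_root_.smul_apply, smul_smul]
  congr 1
  ring

theorem smul_integral_smul_exp_apply_integral {g : ℝ → E} (hg : Continuous g) (n : ℕ)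
    (t₀ h : ℝ) :
    h • ∫ s in (0:ℝ)..1, ((s * h) ^ (n + 1) / n !) • exp (((1 - s) * h) • L)
        (∫ θ in (0:ℝ)..1, (1 - θ) ^ n • g (t₀ + θ * (s * h))) =
      (h ^ (n + 2) / n !) • ∫ s in (0:ℝ)..1, ∫ θ in (0:ℝ)..1,
        (s ^ (n + 1) * (1 - θ) ^ n) • exp (((1 - s) * h) • L) (g (t₀ + θ * s * h)) := by
  rw [← intervalIntegral.integral_smul, ← intervalIntegral.integral_smul]
  refine integral_congr fun s _ => ?_
  have hint : IntervalIntegrable (fun θ : ℝ => (1 - θ) ^ n • g (t₀ + θ * (s * h))) volume 0 1 :=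
    (by fun_prop : Continuous _).intervalIntegrable 0 1
  rw [← ContinuousLinearMap.intervalIntegral_comp_comm _ hint, ← intervalIntegral.integral_smul,
    ← intervalIntegral.integral_smul, ← intervalIntegral.integral_smul]
  refine integral_congr fun θ _ => ?_
  simp only [map_smul, smul_smul, mul_assoc]
  congr 1
  ring

theorem phi_expansion_of_hasDerivAt {x q : ℝ → E} {n : ℕ} (hq : ContDiff ℝ (n + 1 : ℕ) q)
    (hx : ∀ t, HasDerivAt x (L (x t) + q t) t) (t₀ h : ℝ) :
    x (t₀ + h) = exp (h • L) (x t₀) +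
      ∑ k ∈ range (n + 1), h ^ (k + 1) • phi (k + 1) (h • L) (iteratedDeriv k q t₀) +
      (h ^ (n + 2) / n !) • ∫ s in (0:ℝ)..1, ∫ θ in (0:ℝ)..1,
        (s ^ (n + 1) * (1 - θ) ^ n) • exp (((1 - s) * h) • L)
          (iteratedDeriv (n + 1) q (t₀ + θ * s * h)) := by
  have hg : Continuous (iteratedDeriv (n + 1) q) := hq.continuous_iteratedDeriv (n + 1) le_rfl
  have hU : Continuous fun s : ℝ => exp (((1 - s) * h) • L) :=
    (differentiable_exp_smul_const ℝ L).continuous.comp ((continuous_sub_left 1).mul continuous_const)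
  have htaylor : ∀ s : ℝ, exp (((1 - s) * h) • L) (q (t₀ + s * h)) =
      ∑ k ∈ range (n + 1), ((s * h) ^ k / k !) • exp (((1 - s) * h) • L) (iteratedDeriv k q t₀) +
      ((s * h) ^ (n + 1) / n !) • exp (((1 - s) * h) • L)
        (∫ θ in (0:ℝ)..1, (1 - θ) ^ n • iteratedDeriv (n + 1) q (t₀ + θ * (s * h))) := by
    intro s
    rw [map_add_eq_sum_add_integral_iteratedDeriv hq, map_add, map_sum, map_smul]
    simp only [map_smul]
  have hterm : ∀ k, Continuous fun s : ℝ =>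
      ((s * h) ^ k / k !) • exp (((1 - s) * h) • L) (iteratedDeriv k q t₀) := fun k =>
    (by fun_prop : Continuous fun s : ℝ => (s * h) ^ k / k !).smul (hU.clm_apply continuous_const)
  have hrem : Continuous fun s : ℝ => ((s * h) ^ (n + 1) / n !) • exp (((1 - s) * h) • L)
      (∫ θ in (0:ℝ)..1, (1 - θ) ^ n • iteratedDeriv (n + 1) q (t₀ + θ * (s * h))) :=
    (by fun_prop : Continuous fun s : ℝ => (s * h) ^ (n + 1) / n !).smul (hU.clm_apply
      (continuous_parametric_intervalIntegral_of_continuous' (by fun_prop) 0 1))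
  rw [eq_exp_smul_apply_add_integral_of_hasDerivAt hq.continuous hx, integral_congr fun s _ => htaylor s,
    intervalIntegral.integral_add ((continuous_finsetSum _ fun k _ => hterm k).intervalIntegrable 0 1)
      (hrem.intervalIntegrable 0 1),
    intervalIntegral.integral_finsetSum fun k _ => (hterm k).intervalIntegrable 0 1,
    smul_add, Finset.smul_sum, add_assoc, smul_integral_smul_exp_apply_integral hg]
  congr 2
  exact Finset.sum_congr rfl fun k _ => (pow_succ_smul_phi_succ_apply h k _).symm

end LinearODE

theorem Matrix.hasDerivAt_iff {m n : Type*} [Fintype n] {P : ℝ → Matrix m n ℝ}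
    {P' : Matrix m n ℝ} {t : ℝ} :
    HasDerivAt P P' t ↔ ∀ i j, HasDerivAt (fun t => P t i j) (P' i j) t :=
  ⟨fun h i j => hasDerivAt_pi.1 (hasDerivAt_pi.1 h i) j,
    fun h => hasDerivAt_pi.2 fun i => hasDerivAt_pi.2 (h i)⟩

theorem HasDerivAt.matrix_mul {l m n : Type*} [Fintype m] [Fintype n] {P : ℝ → Matrix l m ℝ}
    {R : ℝ → Matrix m n ℝ} {P' : Matrix l m ℝ} {R' : Matrix m n ℝ} {t : ℝ}
    (hP : HasDerivAt P P' t) (hR : HasDerivAt R R' t) :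
    HasDerivAt (fun t => P t * R t) (P' * R t + P t * R') t := by
  rw [Matrix.hasDerivAt_iff] at hP hR ⊢
  intro i j
  simp only [mul_apply, Matrix.add_apply, ← Finset.sum_add_distrib]
  exact HasDerivAt.fun_sum fun k _ => (hP i k).fun_mul (hR k j)

namespace Matrix

variable {m n : Type*} [Fintype m] [DecidableEq m] [Fintype n] [DecidableEq n]

theorem hasDerivAt_exp_smul_const (A : Matrix m m ℝ) (t : ℝ) :
    HasDerivAt (fun t : ℝ => exp (t • A)) (exp (t • A) * A) t := by
  -- Any algebra norm will do: all norms on matrices induce the product topology.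
  let _ : NormedRing (Matrix m m ℝ) := Matrix.linftyOpNormedRing
  let _ : NormedAlgebra ℝ (Matrix m m ℝ) := Matrix.linftyOpNormedAlgebra
  exact @_root_.hasDerivAt_exp_smul_const ℝ _ _ _ _ (FiniteDimensional.complete ℝ _) A t

theorem hasDerivAt_exp_smul_const' (A : Matrix m m ℝ) (t : ℝ) :
    HasDerivAt (fun t : ℝ => exp (t • A)) (A * exp (t • A)) t := by
  let _ : NormedRing (Matrix m m ℝ) := Matrix.linftyOpNormedRing
  let _ : NormedAlgebra ℝ (Matrix m m ℝ) := Matrix.linftyOpNormedAlgebra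
  exact @_root_.hasDerivAt_exp_smul_const' ℝ _ _ _ _ (FiniteDimensional.complete ℝ _) A t

theorem hasDerivAt_exp_smul_mul_mul_exp_smul (A : Matrix m m ℝ) (D : Matrix n n ℝ)
    (Y : Matrix m n ℝ) (t : ℝ) :
    HasDerivAt (fun t : ℝ => exp (t • A) * Y * exp (t • D))
      (A * (exp (t • A) * Y * exp (t • D)) + exp (t • A) * Y * exp (t • D) * D) t := by
  convert ((hasDerivAt_exp_smul_const' A t).matrix_mul (hasDerivAt_const t Y)).matrix_mul
    (hasDerivAt_exp_smul_const D t) using 1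
  simp only [Matrix.mul_zero, add_zero, Matrix.mul_assoc]

end Matrix

/-- **Lemma 1.** If `X' = A·X + X·D + Q(t)` with `Q` an `m`-times
continuously differentiable inhomogeneity and `X(tₙ) = Xₙ`, then
`X(tₙ+h) = e^{hS}(Xₙ) + Σ_{j=1}^{m} hʲ·φⱼ(hS)(Q^{(j−1)}(tₙ)) + R_m(h)` with
`R_m(h) = (h^{m+1}/(m−1)!)·∫₀¹∫₀¹ s^m (1−θ)^{m−1} e^{(1−s)hA}·Q^{(m)}(tₙ+θsh)·e^{(1−s)hD} dθ ds`,
where `S` is the Sylvester operator `S(X) = A·X + X·D`. -/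
theorem msde_phi_expansion (M N : ℕ)
    (A : Matrix (Fin M) (Fin M) ℝ) (D : Matrix (Fin N) (Fin N) ℝ)
    (m : ℕ) (hm : 1 ≤ m)
    (Q : ℝ → Matrix (Fin M) (Fin N) ℝ) (hQ : ContDiff ℝ m Q)
    (S : Matrix (Fin M) (Fin N) ℝ →L[ℝ] Matrix (Fin M) (Fin N) ℝ)
    (hS : ∀ X, S X = A * X + X * D)
    (X : ℝ → Matrix (Fin M) (Fin N) ℝ)
    (hX : ∀ t, HasDerivAt X (A * X t + X t * D + Q t) t)
    (tn : ℝ) (Xn : Matrix (Fin M) (Fin N) ℝ) (hXn : X tn = Xn) :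
    ∀ h : ℝ, 0 < h →
      X (tn + h) = @NormedSpace.exp (Matrix (Fin M) (Fin N) ℝ →L[ℝ] Matrix (Fin M) (Fin N) ℝ) _ _
        (by exact @NonUnitalSeminormedRing.toIsTopologicalRing _
              (@SeminormedRing.toNonUnitalSeminormedRing _
                (@NormedRing.toSeminormedRing _ ContinuousLinearMap.toNormedRing))) (h • S) Xn +
        (∑ j ∈ Finset.Icc 1 m, h ^ j • phi j (h • S) (iteratedDeriv (j - 1) Q tn)) +
        (h ^ (m + 1) / (Nat.factorial (m - 1) : ℝ)) •
          ∫ s in (0:ℝ)..1, ∫ θ in (0:ℝ)..1,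
            (s ^ m * (1 - θ) ^ (m - 1)) •
              (NormedSpace.exp (((1 - s) * h) • A) * iteratedDeriv m Q (tn + θ * s * h) *
                NormedSpace.exp (((1 - s) * h) • D)) := by
  -- `S` lives on matrices with the product topology, the general lemmas use the normed one; the
  -- two instances agree only after unfolding, hence the closing `exact`s and `rfl`s below.
  intro h _
  obtain ⟨n, rfl⟩ : ∃ n, m = n + 1 := Nat.exists_eq_add_of_le' hm
  have hx : ∀ t, HasDerivAt X (S (X t) + Q t) t := fun t => by simpa only [hS] using hX t
  have hsylvester := fun (c : ℝ) (Y : Matrix (Fin M) (Fin N) ℝ) =>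
    exp_smul_apply_eq_of_hasDerivAt (L := S) (x := fun t => exp (t • A) * Y * exp (t • D))
      (fun t => by
        have hY := hasDerivAt_exp_smul_mul_mul_exp_smul A D Y t
        rw [← hS] at hY
        exact hY) c
  simp only [zero_smul, exp_zero, Matrix.one_mul, Matrix.mul_one] at hsylvester
  rw [phi_expansion_of_hasDerivAt hQ hx tn h, hXn]
  congr 2
  · rw [← Finset.Ico_add_one_right_eq_Icc, Finset.sum_Ico_eq_sum_range, add_tsub_cancel_right]
    exact Finset.sum_congr rfl fun k _ => by rw [add_comm 1 k, Nat.add_sub_cancel]; rfl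
  · refine integral_congr fun s _ => integral_congr fun θ _ => ?_
    rw [hsylvester, Nat.add_sub_cancel]
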